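/- arXiv:2004.07996 — 5 statements merged into one kernel-verified Lean document; each statement's English description precedes it below -/
import Mathlib

section
/- Let n ≥ 2, let p : Fin n → ℝ² be in counterclockwise convex position, and let σ : Fin n → Fin n be a bijection whose spanning path on p is noncrossing. Then for every t with 1 ≤ t ≤ n, the set {σ 0, σ 1, …, σ (t−1)} is a cyclic arc of Fin n; moreover, if t < n, then σ (t−1) is an endpoint of this arc (i.e., removing σ (t−1) from the set again yields a cyclic arc). -/
/-!
Induction on the length of the prefix. Suppose the first `t + 1` vertices of the path form an
arc and the next vertex `s` is not adjacent to it. Then the vertices not yet visited lie on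
both sides of the chord joining the last visited vertex to `s`, so the rest of the path has an
edge joining the two sides; for points in convex position that edge crosses the chord.
Removing `σ (t - 1)` from the prefix of length `t` leaves the prefix of length `t - 1`, which
is again an arc.
-/

/-- Signed area determinant of two vectors in the plane. -/
def det2 (u v : ℝ × ℝ) : ℝ := u.1 * v.2 - u.2 * v.1

/-- `p` lists points in counterclockwise convex position. -/
def CCWConvex {n : ℕ} (p : Fin n → ℝ × ℝ) : Prop :=
  ∀ i j k : Fin n, i < j → j < k → 0 < det2 (p j - p i) (p k - p i)

/-- The path visiting `f 0, f 1, …` is noncrossing: consecutive edges meet exactly at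
their shared vertex, and nonconsecutive edges are disjoint. -/
def NoncrossingPath {m : ℕ} (f : Fin m → ℝ × ℝ) : Prop :=
  ∀ k l : ℕ, ∀ hk : k + 1 < m, ∀ hl : l + 1 < m, k < l →
    if l = k + 1 then
      segment ℝ (f ⟨k, by omega⟩) (f ⟨k + 1, hk⟩) ∩
        segment ℝ (f ⟨l, by omega⟩) (f ⟨l + 1, hl⟩) = {f ⟨k + 1, hk⟩}
    else
      Disjoint (segment ℝ (f ⟨k, by omega⟩) (f ⟨k + 1, hk⟩))
        (segment ℝ (f ⟨l, by omega⟩) (f ⟨l + 1, hl⟩))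

/-- `A` is a cyclic arc of `Fin n`: a set of the form `{i, i+1, …, i+t-1}` (mod `n`). -/
def IsArc {n : ℕ} (A : Set (Fin n)) : Prop :=
  ∃ i t : ℕ, t ≤ n ∧ ∀ x : Fin n, x ∈ A ↔ ∃ r < t, (x : ℕ) = (i + r) % n

theorem det2_sub_rotate (a b c : ℝ × ℝ) : det2 (b - a) (c - a) = det2 (c - b) (a - b) := by
  simp only [det2, Prod.fst_sub, Prod.snd_sub]; ring

theorem det2_swap (u v : ℝ × ℝ) : det2 u v = -det2 v u := by
  simp only [det2]; ring

/-- If `b, d` lie on opposite sides of the line `ac` and `a, c` on opposite sides of the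
line `bd`, the segments `[a, c]` and `[b, d]` meet. -/
theorem segment_inter_segment_nonempty_of_det2 {a b c d : ℝ × ℝ}
    (hb : det2 (c - a) (b - a) < 0) (hd : 0 < det2 (c - a) (d - a))
    (ha : 0 < det2 (d - b) (a - b)) (hc : det2 (d - b) (c - b) < 0) :
    (segment ℝ a c ∩ segment ℝ b d).Nonempty := by
  set α := det2 (d - b) (a - b)
  set γ := det2 (d - b) (c - b)
  set β := det2 (c - a) (b - a)
  set δ := det2 (c - a) (d - a)
  have hsum : α - γ = δ - β := by
    simp only [α, β, γ, δ, det2, Prod.fst_sub, Prod.snd_sub]; ring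
  have hpos : 0 < α - γ := by linarith
  -- the intersection point, written as a combination of `a, c` and of `b, d`
  have hpt : δ • b + (-β) • d = (-γ) • a + α • c := by
    apply Prod.ext <;>
      simp only [α, β, γ, δ, det2, Prod.smul_fst, Prod.smul_snd, Prod.fst_add, Prod.snd_add,
        Prod.fst_sub, Prod.snd_sub, smul_eq_mul] <;> ring
  have hD : α - γ ≠ 0 := hpos.ne'
  refine ⟨(-γ / (α - γ)) • a + (α / (α - γ)) • c,
    ⟨_, _, div_nonneg (by linarith) hpos.le, div_nonneg ha.le hpos.le,
      by rw [← add_div, div_eq_one_iff_eq hD]; ring, rfl⟩, ?_⟩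
  refine ⟨δ / (α - γ), -β / (α - γ), div_nonneg hd.le hpos.le,
    div_nonneg (by linarith) hpos.le, by rw [← add_div, div_eq_one_iff_eq hD]; linarith, ?_⟩
  simp only [div_eq_inv_mul, mul_smul, ← smul_add, hpt]

namespace CCWConvex

variable {n : ℕ} {p : Fin n → ℝ × ℝ}

theorem segment_inter_nonempty (hp : CCWConvex p) {a b c d : Fin n}
    (hab : a < b) (hbc : b < c) (hcd : c < d) :
    (segment ℝ (p a) (p c) ∩ segment ℝ (p b) (p d)).Nonempty := by
  have habc := hp a b c hab hbc
  have habd := hp a b d hab (hbc.trans hcd)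
  have hbcd := hp b c d hbc hcd
  rw [det2_swap] at habc hbcd
  rw [det2_sub_rotate] at habd
  exact segment_inter_segment_nonempty_of_det2 (by linarith)
    (hp a c d (hab.trans hbc) hcd) habd (by linarith)

theorem comp_add_left [NeZero n] (hp : CCWConvex p) (o : Fin n) :
    CCWConvex fun k => p (o + k) := by
  intro i j k hij hjk
  have hcyc : (o + i < o + j ∧ o + j < o + k) ∨ (o + k < o + i ∧ o + i < o + j) ∨
      (o + j < o + k ∧ o + k < o + i) := by
    simp only [Fin.lt_def, Fin.val_add_eq_ite] at hij hjk ⊢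
    have := o.isLt; have := k.isLt
    split_ifs <;> omega
  rcases hcyc with ⟨h1, h2⟩ | ⟨h1, h2⟩ | ⟨h1, h2⟩
  · exact hp _ _ _ h1 h2
  · rw [det2_sub_rotate, det2_sub_rotate]; exact hp _ _ _ h1 h2
  · rw [det2_sub_rotate]; exact hp _ _ _ h1 h2

theorem segment_inter_nonempty_of_sub_lt [NeZero n] (hp : CCWConvex p) (o : Fin n)
    {a b c d : Fin n} (hab : a - o < b - o) (hbc : b - o < c - o) (hcd : c - o < d - o) :
    (segment ℝ (p a) (p c) ∩ segment ℝ (p b) (p d)).Nonempty := by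
  simpa only [add_sub_cancel] using (hp.comp_add_left o).segment_inter_nonempty hab hbc hcd

end CCWConvex

/-- The arc `{o, o + 1, …, o + (t - 1)}` of `Fin n`. -/
def cyclicArc {n : ℕ} (o : Fin n) (t : ℕ) : Set (Fin n) := {x | ((x - o : Fin n) : ℕ) < t}

section CyclicArc

variable {n : ℕ}

@[simp]
theorem mem_cyclicArc {o x : Fin n} {t : ℕ} : x ∈ cyclicArc o t ↔ ((x - o : Fin n) : ℕ) < t :=
  Iff.rfl

theorem cyclicArc_zero (o : Fin n) : cyclicArc o 0 = ∅ := by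
  simp [cyclicArc]

variable [NeZero n]

theorem isArc_cyclicArc (o : Fin n) {t : ℕ} (ht : t ≤ n) : IsArc (cyclicArc o t) := by
  refine ⟨o, t, ht, fun x => ⟨fun hx => ⟨_, hx, ?_⟩, ?_⟩⟩
  · rw [← Fin.val_add, add_sub_cancel]
  · rintro ⟨r, hr, hx⟩
    have hx : x = o + ⟨r, hr.trans_le ht⟩ := Fin.ext (by simp [Fin.val_add, hx])
    simpa [hx]

theorem insert_cyclicArc_of_sub_val_eq {o s : Fin n} {t : ℕ} (hs : ((s - o : Fin n) : ℕ) = t) :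
    insert s (cyclicArc o t) = cyclicArc o (t + 1) := by
  ext x
  rw [Set.mem_insert_iff, ← sub_left_inj (a := o), ← Fin.val_inj, hs, mem_cyclicArc, mem_cyclicArc]
  omega

theorem insert_cyclicArc_of_sub_val_add_one_eq {o s : Fin n} {t : ℕ}
    (hs : ((s - o : Fin n) : ℕ) + 1 = n) :
    insert s (cyclicArc o t) = cyclicArc s (t + 1) := by
  ext x
  rw [Set.mem_insert_iff, mem_cyclicArc, mem_cyclicArc, ← sub_sub_sub_cancel_right x s o,
    ← sub_left_inj (a := o), ← Fin.val_inj]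
  rcases lt_or_ge (x - o) (s - o) with h | h
  · rw [Fin.coe_sub_iff_lt.mpr h]; rw [Fin.lt_def] at h; omega
  · rw [Fin.sub_val_of_le h]; have := (x - o).isLt; rw [Fin.le_def] at h; omega

end CyclicArc

theorem Nat.exists_and_not_succ_of_le {P : ℕ → Prop} {a b : ℕ} (hab : a ≤ b) (ha : P a)
    (hb : ¬P b) : ∃ l, a ≤ l ∧ l < b ∧ P l ∧ ¬P (l + 1) := by
  induction b, hab using Nat.le_induction with
  | base => exact absurd ha hb
  | succ b hab ih =>
    by_cases h : P b
    · exact ⟨b, hab, b.lt_succ_self, h, hb⟩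
    · obtain ⟨l, hal, hlb, hl⟩ := ih h
      exact ⟨l, hal, hlb.trans b.lt_succ_self, hl⟩

theorem Fin.exists_xor_mem_succ {α : Type*} {m : ℕ} (f : Fin m → α) {S : Set α} {a : ℕ}
    {i j : Fin m} (hi : a ≤ i) (hj : a ≤ j) (hfi : f i ∈ S) (hfj : f j ∉ S) :
    ∃ l, ∃ hl : l + 1 < m, a ≤ l ∧ Xor (f ⟨l, by omega⟩ ∈ S) (f ⟨l + 1, hl⟩ ∈ S) := by
  let P k := ∀ h : k < m, f ⟨k, h⟩ ∈ S
  rcases le_total (i : ℕ) j with hij | hji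
  · obtain ⟨l, hil, hlj, hl, hl1⟩ :=
      Nat.exists_and_not_succ_of_le (P := P) hij (fun _ => hfi) fun h => hfj (h j.isLt)
    exact ⟨l, (Nat.succ_le_of_lt hlj).trans_lt j.isLt, hil.trans' hi,
      Or.inl ⟨hl _, fun h => hl1 fun _ => h⟩⟩
  · obtain ⟨l, hjl, hli, hl, hl1⟩ :=
      Nat.exists_and_not_succ_of_le (P := fun k => ¬P k) hji (fun h => hfj (h j.isLt))
        fun h => h fun _ => hfi
    exact ⟨l, (Nat.succ_le_of_lt hli).trans_lt i.isLt, hjl.trans' hj,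
      Or.inr ⟨not_not.mp hl1 _, fun h => hl fun _ => h⟩⟩

theorem NoncrossingPath.disjoint_segment {m : ℕ} {f : Fin m → ℝ × ℝ} (hf : NoncrossingPath f)
    {k l : ℕ} (hkl : k + 1 < l) (hl : l + 1 < m) :
    Disjoint (segment ℝ (f ⟨k, by omega⟩) (f ⟨k + 1, by omega⟩))
      (segment ℝ (f ⟨l, by omega⟩) (f ⟨l + 1, hl⟩)) := by
  have h := hf k l (by omega) hl (by omega)
  rwa [if_neg (by omega)] at h

theorem Fin.setOf_val_lt_succ {n t : ℕ} (ht : t < n) :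
    {k : Fin n | (k : ℕ) < t + 1} = insert (⟨t, ht⟩ : Fin n) {k : Fin n | (k : ℕ) < t} := by
  ext k
  simp only [Set.mem_insert_iff, Set.mem_ofPred_eq, Fin.ext_iff]
  omega

section SpanningPath

variable {n : ℕ} [NeZero n] {p : Fin n → ℝ × ℝ} {σ : Equiv.Perm (Fin n)}

/-- The next vertex is adjacent to the arc: it is `o + (t + 1)` or `o - 1`. -/
theorem sub_val_eq_or_of_image_eq_cyclicArc (hp : CCWConvex p) (hσ : NoncrossingPath (p ∘ σ))
    {t : ℕ} (ht : t + 1 < n) {o : Fin n}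
    (hS : σ '' {k : Fin n | (k : ℕ) < t + 1} = cyclicArc o (t + 1)) :
    ((σ ⟨t + 1, ht⟩ - o : Fin n) : ℕ) = t + 1 ∨ ((σ ⟨t + 1, ht⟩ - o : Fin n) : ℕ) + 1 = n := by
  set s := σ ⟨t + 1, ht⟩
  have hmem (j : Fin n) : ((σ j - o : Fin n) : ℕ) < t + 1 ↔ (j : ℕ) < t + 1 := by
    rw [← mem_cyclicArc, ← hS, σ.injective.mem_set_image]; rfl
  by_contra! hne
  set m := ((s - o : Fin n) : ℕ)
  have hm : t + 1 < m ∧ m + 1 < n := by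
    have : ¬m < t + 1 := (hmem ⟨t + 1, ht⟩).not.mpr (lt_irrefl _)
    have := (s - o).isLt; omega
  have hlater (j : Fin n) :
      t + 1 < j ↔ t + 1 ≤ ((σ j - o : Fin n) : ℕ) ∧ ((σ j - o : Fin n) : ℕ) ≠ m := by
    have hs : ((σ j - o : Fin n) : ℕ) = m ↔ (j : ℕ) = t + 1 := by
      rw [Fin.val_inj, sub_left_inj, σ.injective.eq_iff, Fin.ext_iff]
    have := hmem j; omega
  let S : Set (Fin n) := {x | ((x - o : Fin n) : ℕ) < m}
  have hcross (u v : Fin n) (hSu : σ u ∈ S) (hSv : σ v ∉ S) (hu : t + 1 < u) (hv : t + 1 < v) :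
      (segment ℝ (p (σ ⟨t, by omega⟩)) (p s) ∩ segment ℝ (p (σ u)) (p (σ v))).Nonempty := by
    have := (hmem ⟨t, by omega⟩).mpr (Nat.lt_succ_self t)
    have := (hlater u).mp hu; have := (hlater v).mp hv
    change _ < m at hSu; change ¬_ < m at hSv
    exact hp.segment_inter_nonempty_of_sub_lt o (Fin.lt_def.mpr (by omega)) (Fin.lt_def.mpr hSu)
      (Fin.lt_def.mpr (by omega))
  have hoff (r : ℕ) (hr : r < n) : ((o + ⟨r, hr⟩ - o : Fin n) : ℕ) = r := by
    rw [add_sub_cancel_left]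
  obtain ⟨l, hl, htl, hxor⟩ := Fin.exists_xor_mem_succ σ (S := S) (a := t + 2)
    (i := σ.symm (o + ⟨t + 1, ht⟩)) (j := σ.symm (o + ⟨n - 1, by omega⟩))
    ((hlater _).mpr (by rw [σ.apply_symm_apply, hoff]; omega))
    ((hlater _).mpr (by rw [σ.apply_symm_apply, hoff]; omega))
    (by rw [σ.apply_symm_apply]; exact (hoff _ ht).trans_lt hm.1)
    (by rw [σ.apply_symm_apply]; exact (hoff _ _).trans_ge (by omega) |>.not_gt)
  have hdisj : segment ℝ (p (σ ⟨t, by omega⟩)) (p s) ∩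
      segment ℝ (p (σ ⟨l, by omega⟩)) (p (σ ⟨l + 1, hl⟩)) = ∅ :=
    Set.disjoint_iff_inter_eq_empty.mp (hσ.disjoint_segment (by omega) hl)
  rcases hxor with ⟨h1, h2⟩ | ⟨h1, h2⟩
  · exact (hcross _ _ h1 h2 htl htl.step).ne_empty hdisj
  · have h := hcross _ _ h1 h2 htl.step htl
    rw [segment_symm ℝ (p (σ ⟨l + 1, hl⟩))] at h
    exact h.ne_empty hdisj

theorem exists_image_eq_cyclicArc (hp : CCWConvex p) (hσ : NoncrossingPath (p ∘ σ)) {t : ℕ}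
    (ht : t ≤ n) : ∃ o : Fin n, σ '' {k : Fin n | (k : ℕ) < t} = cyclicArc o t := by
  induction t with
  | zero => exact ⟨0, by simp [cyclicArc_zero]⟩
  | succ t ih =>
    obtain ⟨o, ho⟩ := ih (by omega)
    rw [Fin.setOf_val_lt_succ (show t < n by omega), Set.image_insert_eq]
    rcases t with _ | t
    · refine ⟨σ ⟨0, by omega⟩, ?_⟩
      rw [ho, cyclicArc_zero, ← cyclicArc_zero (σ ⟨0, by omega⟩)]
      exact insert_cyclicArc_of_sub_val_eq (by simp)
    · rw [ho]
      rcases sub_val_eq_or_of_image_eq_cyclicArc hp hσ (by omega) ho with h | h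
      · exact ⟨o, insert_cyclicArc_of_sub_val_eq h⟩
      · exact ⟨_, insert_cyclicArc_of_sub_val_add_one_eq h⟩

end SpanningPath

theorem prefix_of_noncrossing_path_is_arc {n : ℕ}
    (p : Fin n → ℝ × ℝ) (hp : CCWConvex p)
    (σ : Equiv.Perm (Fin n)) (hσ : NoncrossingPath (p ∘ σ)) :
    ∀ t : ℕ, ∀ _ht1 : 1 ≤ t, ∀ _ht2 : t ≤ n,
      IsArc (⇑σ '' {k : Fin n | (k : ℕ) < t}) ∧
      (∀ _ht3 : t < n,
        IsArc ((⇑σ '' {k : Fin n | (k : ℕ) < t}) \ {σ ⟨t - 1, by omega⟩})) := by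
  intro t ht1 ht2
  have : NeZero n := ⟨by omega⟩
  have harc {t : ℕ} (ht : t ≤ n) : IsArc (σ '' {k : Fin n | (k : ℕ) < t}) := by
    obtain ⟨o, ho⟩ := exists_image_eq_cyclicArc hp hσ ht
    exact ho ▸ isArc_cyclicArc o ht
  refine ⟨harc ht2, fun _ => ?_⟩
  obtain ⟨t, rfl⟩ := Nat.exists_eq_add_of_le' ht1
  have hnotMem : σ ⟨t, by omega⟩ ∉ σ '' {k : Fin n | (k : ℕ) < t} := by simp
  simpa only [Nat.add_sub_cancel, Fin.setOf_val_lt_succ (show t < n by omega), Set.image_insert_eq,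
    Set.insert_sdiff_self_of_notMem hnotMem] using harc (t := t) (by omega)
end

section
/- Let n ≥ 2, let p : Fin n → ℝ² be in counterclockwise convex position, let T be a tree on vertex set Fin n whose straight-line drawing on p is noncrossing, and let e = {u, v} be an edge of T. Then the vertex set of the connected component of T − e (the graph T with edge e deleted) containing u is a cyclic arc of Fin n (and consequently so is the vertex set of the component containing v). -/
/-- The straight-line drawing of `G` on the points `p` is noncrossing: segments of two
distinct edges intersect in at most the image of a common endpoint. -/
def NoncrossingDrawing {n : ℕ} (G : SimpleGraph (Fin n)) (p : Fin n → ℝ × ℝ) : Prop :=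
  ∀ u v w x : Fin n, G.Adj u v → G.Adj w x → s(u, v) ≠ s(w, x) →
    segment ℝ (p u) (p v) ∩ segment ℝ (p w) (p x) ⊆
      p '' (({u, v} : Set (Fin n)) ∩ {w, x})

/-!
Deleting the edge `uv` leaves the component `S` of `u` and the component of `v`, which contains
everything outside `S`. If `S` were not a cyclic arc, then `S` and its complement would interleave
along the convex polygon: `a < c < b < d` with `a, b` on one side and `c, d` on the other. Some
edge of the path from `a` to `b` has one endpoint strictly between `c` and `d` and one outside, so
its chord separates `c` from `d`; the path from `c` to `d` avoids its endpoints, hence has an edge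
crossing it, contradicting the noncrossing drawing.
-/

open SimpleGraph Set

lemma segment_inter_segment_nonempty_of_det2_pos {a b c d : ℝ × ℝ}
    (habc : 0 < det2 (b - a) (c - a)) (hbcd : 0 < det2 (c - b) (d - b))
    (hacd : 0 < det2 (c - a) (d - a)) (habd : 0 < det2 (b - a) (d - a)) :
    (segment ℝ a c ∩ segment ℝ b d).Nonempty := by
  set Δ := det2 (c - a) (d - b)
  have hΔs : Δ = det2 (b - a) (d - a) + det2 (c - b) (d - b) := by
    simp only [Δ, det2, Prod.fst_sub, Prod.snd_sub]; ring
  have hΔt : Δ = det2 (b - a) (c - a) + det2 (c - a) (d - a) := by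
    simp only [Δ, det2, Prod.fst_sub, Prod.snd_sub]; ring
  have hΔ : 0 < Δ := by linarith
  -- Cramer's rule for `a + s • (c - a) = b + t • (d - b)`
  set s := det2 (b - a) (d - a) / Δ
  set t := det2 (b - a) (c - a) / Δ
  have hst : Δ • (b + t • (d - b)) = Δ • (a + s • (c - a)) := by
    rw [smul_add, smul_add, smul_smul, smul_smul, mul_div_cancel₀ _ hΔ.ne',
      mul_div_cancel₀ _ hΔ.ne']
    ext <;> simp only [Δ, det2, Prod.fst_add, Prod.snd_add, Prod.fst_sub, Prod.snd_sub,
      Prod.smul_fst, Prod.smul_snd, smul_eq_mul] <;> ring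
  rw [segment_eq_image', segment_eq_image']
  refine ⟨a + s • (c - a), ⟨s, ⟨by positivity, (div_le_one hΔ).2 (by linarith)⟩, rfl⟩,
    ⟨t, ⟨by positivity, (div_le_one hΔ).2 (by linarith)⟩, smul_right_injective _ hΔ.ne' hst⟩⟩

lemma CCWConvex.segment_inter_segment_nonempty {n : ℕ} {p : Fin n → ℝ × ℝ} (hp : CCWConvex p)
    {i j k l : Fin n} (hij : i < j) (hjk : j < k) (hkl : k < l) :
    (segment ℝ (p i) (p k) ∩ segment ℝ (p j) (p l)).Nonempty :=
  segment_inter_segment_nonempty_of_det2_pos (hp i j k hij hjk) (hp j k l hjk hkl)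
    (hp i k l (hij.trans hjk) hkl) (hp i j l hij (hjk.trans hkl))

lemma NoncrossingDrawing.not_adj_of_lt_of_lt_of_lt {n : ℕ} {p : Fin n → ℝ × ℝ}
    {T : SimpleGraph (Fin n)} (hp : CCWConvex p) (hdraw : NoncrossingDrawing T p)
    {i j k l : Fin n} (hij : i < j) (hjk : j < k) (hkl : k < l) (hik : T.Adj i k) :
    ¬T.Adj j l := by
  intro hjl
  have hne : s(i, k) ≠ s(j, l) := by
    rw [Ne, Sym2.eq_iff]; omega
  obtain ⟨x, hx⟩ := hp.segment_inter_segment_nonempty hij hjk hkl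
  obtain ⟨y, ⟨hy₁, hy₂⟩, -⟩ := hdraw i k j l hik hjl hne hx
  simp only [mem_insert_iff, mem_singleton_iff] at hy₁ hy₂
  omega

lemma NoncrossingDrawing.mem_support_of_mem_Ioo {n : ℕ} {p : Fin n → ℝ × ℝ}
    {T : SimpleGraph (Fin n)} (hp : CCWConvex p) (hdraw : NoncrossingDrawing T p)
    {z w c d : Fin n} (hzw : T.Adj z w) (W : T.Walk c d)
    (hc : c ∈ Ioo z w) (hd : d ∉ Ioo z w) : z ∈ W.support ∨ w ∈ W.support := by
  by_contra! h
  obtain ⟨e, he, hx, hy⟩ := W.exists_boundary_dart _ hc hd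
  have hyz : e.snd ≠ z := fun h' => h.1 (h' ▸ W.dart_snd_mem_support_of_mem_darts he)
  have hyw : e.snd ≠ w := fun h' => h.2 (h' ▸ W.dart_snd_mem_support_of_mem_darts he)
  rw [mem_Ioo] at hx hy
  rcases lt_or_gt_of_ne hyz with hyz | hzy
  · exact hdraw.not_adj_of_lt_of_lt_of_lt hp hyz hx.1 hx.2 e.adj.symm hzw
  · exact hdraw.not_adj_of_lt_of_lt_of_lt hp hx.1 hx.2 (by omega) hzw e.adj

lemma NoncrossingDrawing.exists_mem_support_of_lt_of_lt_of_lt {n : ℕ} {p : Fin n → ℝ × ℝ}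
    {T : SimpleGraph (Fin n)} (hp : CCWConvex p) (hdraw : NoncrossingDrawing T p)
    {a b c d : Fin n} (W₁ : T.Walk a b) (W₂ : T.Walk c d)
    (hac : a < c) (hcb : c < b) (hbd : b < d) :
    ∃ x ∈ W₁.support, x ∈ W₂.support := by
  by_contra! h
  obtain ⟨e, he, hz, hw⟩ :=
    W₁.exists_boundary_dart (Ioo c d)ᶜ (by simp [hac.le]) (by simp [hcb, hbd])
  have hzW₂ := h _ (W₁.dart_fst_mem_support_of_mem_darts he)
  have hwW₂ := h _ (W₁.dart_snd_mem_support_of_mem_darts he)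
  have hzc : e.fst ≠ c := fun h' => hzW₂ (h' ▸ W₂.start_mem_support)
  have hzd : e.fst ≠ d := fun h' => hzW₂ (h' ▸ W₂.end_mem_support)
  rw [mem_compl_iff, not_not, mem_Ioo] at hw
  rw [mem_compl_iff, mem_Ioo] at hz
  rcases lt_or_gt_of_ne hzc with hzc | hcz
  · exact (hdraw.mem_support_of_mem_Ioo hp e.adj W₂ ⟨hzc, hw.1⟩
      (by simp [hw.2.le])).elim hzW₂ hwW₂
  · exact (hdraw.mem_support_of_mem_Ioo hp e.adj.symm W₂.reverse ⟨hw.2, by omega⟩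
      (by simp [hw.1.le])).elim (fun h' => hwW₂ (by simpa using h'))
        (fun h' => hzW₂ (by simpa using h'))

lemma NoncrossingDrawing.reachable_of_lt_of_lt_of_lt {n : ℕ} {p : Fin n → ℝ × ℝ}
    {T G : SimpleGraph (Fin n)} (hp : CCWConvex p) (hdraw : NoncrossingDrawing T p) (hle : G ≤ T)
    {a b c d : Fin n} (hab : G.Reachable a b) (hcd : G.Reachable c d)
    (hac : a < c) (hcb : c < b) (hbd : b < d) : G.Reachable a c := by
  obtain ⟨W₁⟩ := hab
  obtain ⟨W₂⟩ := hcd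
  obtain ⟨x, hx₁, hx₂⟩ := hdraw.exists_mem_support_of_lt_of_lt_of_lt hp (W₁.mapLe hle)
    (W₂.mapLe hle) hac hcb hbd
  rw [Walk.support_mapLe_eq_support] at hx₁ hx₂
  exact (W₁.takeUntil x hx₁).reachable.trans (W₂.takeUntil x hx₂).reachable.symm

lemma SimpleGraph.Reachable.deleteEdges_or {V : Type*} {G : SimpleGraph V} {u v w : V}
    (h : G.Reachable u w) :
    (G.deleteEdges {s(u, v)}).Reachable u w ∨ (G.deleteEdges {s(u, v)}).Reachable v w := by
  obtain ⟨W⟩ := h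
  by_contra hw
  obtain ⟨e, -, he, he'⟩ := W.exists_boundary_dart
    {x | (G.deleteEdges {s(u, v)}).Reachable u x ∨ (G.deleteEdges {s(u, v)}).Reachable v x}
    (Or.inl .rfl) hw
  by_cases huv : s(e.fst, e.snd) = s(u, v)
  · rcases Sym2.eq_iff.1 huv with ⟨-, h⟩ | ⟨-, h⟩
    · exact he' (Or.inr (h ▸ .rfl))
    · exact he' (Or.inl (h ▸ .rfl))
  · have hadj : (G.deleteEdges {s(u, v)}).Adj e.fst e.snd := by
      rw [deleteEdges_adj]
      exact ⟨e.adj, huv⟩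
    exact he' (he.imp (·.trans hadj.reachable) (·.trans hadj.reachable))

def Interleaved {α : Type*} [Preorder α] (A B : Set α) : Prop :=
  ∃ a c b d, a < c ∧ c < b ∧ b < d ∧ a ∈ A ∧ b ∈ A ∧ c ∈ B ∧ d ∈ B

lemma Set.exists_lt_lt_of_not_ordConnected {α : Type*} [LinearOrder α] {s : Set α}
    (h : ¬s.OrdConnected) : ∃ x y z, x < y ∧ y < z ∧ x ∈ s ∧ y ∉ s ∧ z ∈ s := by
  contrapose! h
  refine ⟨fun x hx z hz y ⟨hxy, hyz⟩ => ?_⟩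
  by_contra hy
  exact (h x y z (hxy.lt_of_ne (ne_of_mem_of_not_mem hx hy))
    (hyz.lt_of_ne (ne_of_mem_of_not_mem hz hy).symm) hx hy hz)

lemma ordConnected_or_ordConnected_compl_of_not_interleaved {α : Type*} [LinearOrder α]
    {A : Set α} (h₁ : ¬Interleaved A Aᶜ) (h₂ : ¬Interleaved Aᶜ A) :
    A.OrdConnected ∨ Aᶜ.OrdConnected := by
  by_contra! h
  obtain ⟨x, y, z, hxy, hyz, hx, hy, hz⟩ := exists_lt_lt_of_not_ordConnected h.1
  obtain ⟨a, b, c, hab, hbc, ha, hb, hc⟩ := exists_lt_lt_of_not_ordConnected h.2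
  rw [notMem_compl_iff] at hb
  rcases lt_or_gt_of_ne (ne_of_mem_of_not_mem hx ha) with hxa | hax
  · exact h₁ ⟨x, a, b, c, hxa, hab, hbc, hx, hb, ha, hc⟩
  · exact h₂ ⟨a, x, y, z, hax, hxy, hyz, ha, hy, hx, hz⟩

lemma Fin.exists_forall_mem_iff_of_ordConnected {n : ℕ} {A : Set (Fin n)} (hA : A.OrdConnected) :
    ∃ l r : ℕ, l ≤ r ∧ r ≤ n ∧ ∀ x : Fin n, x ∈ A ↔ l ≤ x ∧ (x : ℕ) < r := by
  classical
  rcases A.eq_empty_or_nonempty with rfl | hne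
  · exact ⟨0, 0, le_rfl, Nat.zero_le n, by simp⟩
  have hne' : A.toFinset.Nonempty := Set.toFinset_nonempty.2 hne
  refine ⟨A.toFinset.min' hne', A.toFinset.max' hne' + 1, ?_, Nat.succ_le_of_lt (Fin.is_lt _),
    fun x => ⟨fun hx => ?_, fun hx => ?_⟩⟩
  · have := A.toFinset.min'_le_max' hne'
    omega
  · have h₁ := A.toFinset.min'_le x (by simpa using hx)
    have h₂ := A.toFinset.le_max' x (by simpa using hx)
    omega
  · have hl := A.toFinset.min'_mem hne'
    have hr := A.toFinset.max'_mem hne'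
    rw [mem_toFinset] at hl hr
    exact hA.out hl hr ⟨by omega, by omega⟩

lemma isArc_of_forall_mem_iff {n : ℕ} {A : Set (Fin n)} {l r : ℕ} (hlr : l ≤ r) (hrn : r ≤ n)
    (h : ∀ x : Fin n, x ∈ A ↔ l ≤ x ∧ (x : ℕ) < r) : IsArc A := by
  refine ⟨l, r - l, by omega, fun x => ?_⟩
  rw [h]
  constructor
  · rintro ⟨hlx, hxr⟩
    exact ⟨x - l, by omega, by rw [Nat.mod_eq_of_lt (by omega)]; omega⟩
  · rintro ⟨ρ, hρ, hx⟩
    rw [Nat.mod_eq_of_lt (by omega)] at hx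
    omega

lemma isArc_of_forall_mem_iff_compl {n : ℕ} {A : Set (Fin n)} {l r : ℕ} (hlr : l ≤ r) (hrn : r ≤ n)
    (h : ∀ x : Fin n, x ∈ A ↔ (x : ℕ) < l ∨ r ≤ x) : IsArc A := by
  have hmod : ∀ ρ < n, (r + ρ) % n = if r + ρ < n then r + ρ else r + ρ - n := fun ρ hρ => by
    split_ifs with hlt
    · exact Nat.mod_eq_of_lt hlt
    · rw [Nat.mod_eq_sub_mod (by omega), Nat.mod_eq_of_lt (by omega)]
  refine ⟨r, n - (r - l), by omega, fun x => ?_⟩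
  rw [h]
  constructor
  · rintro (hx | hx)
    · exact ⟨n - r + x, by omega, by rw [hmod _ (by omega)]; split_ifs <;> omega⟩
    · exact ⟨x - r, by omega, by rw [hmod _ (by omega)]; split_ifs <;> omega⟩
  · rintro ⟨ρ, hρ, hx⟩
    rw [hmod _ (by omega)] at hx
    split_ifs at hx <;> omega

lemma IsArc.of_ordConnected {n : ℕ} {A : Set (Fin n)} (hA : A.OrdConnected) : IsArc A := by
  obtain ⟨l, r, hlr, hrn, h⟩ := Fin.exists_forall_mem_iff_of_ordConnected hA
  exact isArc_of_forall_mem_iff hlr hrn h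

lemma IsArc.of_ordConnected_compl {n : ℕ} {A : Set (Fin n)} (hA : Aᶜ.OrdConnected) : IsArc A := by
  obtain ⟨l, r, hlr, hrn, h⟩ := Fin.exists_forall_mem_iff_of_ordConnected hA
  refine isArc_of_forall_mem_iff_compl hlr hrn fun x => ?_
  rw [← not_iff_not, ← mem_compl_iff, h]
  omega

theorem tree_component_is_arc_general {n : ℕ}
    (p : Fin n → ℝ × ℝ) (hp : CCWConvex p)
    (T : SimpleGraph (Fin n)) (hT : T.IsTree)
    (hdraw : NoncrossingDrawing T p)
    (u v : Fin n) :
    IsArc {w : Fin n | (T.deleteEdges {s(u, v)}).Reachable u w} := by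
  set G := T.deleteEdges {s(u, v)}
  set S := {w : Fin n | G.Reachable u w}
  have hS : ∀ a ∈ S, ∀ b ∈ S, G.Reachable a b := fun _ ha _ hb => ha.symm.trans hb
  have hv : ∀ w ∉ S, G.Reachable v w := fun w hw =>
    (hT.connected.preconnected u w).deleteEdges_or.resolve_left hw
  have hSc : ∀ a ∉ S, ∀ b ∉ S, G.Reachable a b := fun a ha b hb => (hv a ha).symm.trans (hv b hb)
  have hG : G ≤ T := deleteEdges_le _
  have h₁ : ¬Interleaved S Sᶜ := by
    rintro ⟨a, c, b, d, hac, hcb, hbd, ha, hb, hc, hd⟩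
    exact hc (ha.trans (hdraw.reachable_of_lt_of_lt_of_lt hp hG (hS a ha b hb) (hSc c hc d hd)
      hac hcb hbd))
  have h₂ : ¬Interleaved Sᶜ S := by
    rintro ⟨a, c, b, d, hac, hcb, hbd, ha, hb, hc, hd⟩
    exact ha (hc.trans (hdraw.reachable_of_lt_of_lt_of_lt hp hG (hSc a ha b hb) (hS c hc d hd)
      hac hcb hbd).symm)
  exact (ordConnected_or_ordConnected_compl_of_not_interleaved h₁ h₂).elim
    IsArc.of_ordConnected IsArc.of_ordConnected_compl

theorem tree_component_is_arc {n : ℕ} (hn : 2 ≤ n)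
    (p : Fin n → ℝ × ℝ) (hp : CCWConvex p)
    (T : SimpleGraph (Fin n)) (hT : T.IsTree)
    (hdraw : NoncrossingDrawing T p)
    (u v : Fin n) (huv : T.Adj u v) :
    IsArc {w : Fin n | (T.deleteEdges {s(u, v)}).Reachable u w} :=
  tree_component_is_arc_general p hp T hT hdraw u v
end

section
/- Let n ≥ 3, let p : Fin n → ℝ² be in counterclockwise convex position, and let σ : Fin n → Fin n be a bijection whose spanning path on p is noncrossing. Fix a position k with 0 ≤ k ≤ n−1 and delete the vertex p(σ k) from the path, joining its two neighbors (if 0 < k < n−1, the edges [p(σ (k−1)), p(σ k)] and [p(σ k), p(σ (k+1))] are replaced by the single edge [p(σ (k−1)), p(σ (k+1))]; if k = 0 or k = n−1 the incident edge is simply removed). Then the resulting path on the remaining n−1 points, visiting p(σ 0), …, p(σ (k−1)), p(σ (k+1)), …, p(σ (n−1)) in this order, is noncrossing. -/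
/-
The orientation of a triangle of points in convex position is the cyclic order of their
indices, so two chords with four distinct endpoints are disjoint exactly when their endpoints
do not interleave. If a chord `cd` misses both `am` and `mb`, then `c` and `d` lie on the same
side of `a, m` and of `m, b` in the cyclic order, hence on the same side of `a, b`: the chord
`cd` misses `ab`. Every edge of the shortened path is an edge of the original path except the
shortcut `ab` past the deleted vertex `m`, and consecutive edges meet only in their common
vertex because no three of the points are collinear.
-/

open Function Set

def orient (A B C : ℝ × ℝ) : ℝ := det2 (B - A) (C - A)

lemma orient_rotate (A B C : ℝ × ℝ) : orient B C A = orient A B C := by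
  simp only [orient, det2, Prod.fst_sub, Prod.snd_sub]; ring

lemma orient_swap (A B C : ℝ × ℝ) : orient A C B = -orient A B C := by
  simp only [orient, det2, Prod.fst_sub, Prod.snd_sub]; ring

lemma orient_add_smul_sub (A B C D : ℝ × ℝ) (s : ℝ) :
    orient A B (C + s • (D - C)) = (1 - s) * orient A B C + s * orient A B D := by
  simp only [orient, det2, Prod.fst_sub, Prod.snd_sub, Prod.fst_add, Prod.snd_add,
    Prod.smul_fst, Prod.smul_snd, smul_eq_mul]; ring

lemma orient_eq_zero_of_mem_segment {A B x : ℝ × ℝ} (hx : x ∈ segment ℝ A B) :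
    orient A B x = 0 := by
  rw [segment_eq_image'] at hx
  obtain ⟨t, -, rfl⟩ := hx
  rw [orient_add_smul_sub]
  simp only [orient, det2, sub_self, Prod.fst_zero, Prod.snd_zero]; ring

lemma linearIndependent_of_det2_ne_zero {u v : ℝ × ℝ} (h : det2 u v ≠ 0) :
    LinearIndependent ℝ ![u, v] := by
  rw [LinearIndependent.pair_iff]
  intro s t hst
  have h₁ : s * u.1 + t * v.1 = 0 := by simpa using congrArg Prod.fst hst
  have h₂ : s * u.2 + t * v.2 = 0 := by simpa using congrArg Prod.snd hst
  have hs : s * det2 u v = 0 := by unfold det2; linear_combination v.2 * h₁ - v.1 * h₂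
  have ht : t * det2 u v = 0 := by unfold det2; linear_combination u.1 * h₂ - u.2 * h₁
  exact ⟨(mul_eq_zero.1 hs).resolve_right h, (mul_eq_zero.1 ht).resolve_right h⟩

lemma segment_inter_segment_eq_singleton {A B C : ℝ × ℝ} (h : orient A B C ≠ 0) :
    segment ℝ A B ∩ segment ℝ B C = {B} := by
  rw [segment_symm]
  refine segment_inter_eq_endpoint_of_linearIndependent_sub ℝ
    (linearIndependent_of_det2_ne_zero ?_)
  rwa [← orient, orient_swap, orient_rotate, neg_ne_zero]

lemma mul_neg_of_convex_combination_eq_zero {a b s : ℝ} (ha : a ≠ 0) (hb : b ≠ 0)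
    (hs₀ : 0 ≤ s) (hs₁ : s ≤ 1) (h : (1 - s) * a + s * b = 0) : a * b < 0 := by
  have hab : a * b = -(s * b ^ 2 + (1 - s) * a ^ 2) := by linear_combination (a + b) * h
  have : 0 < s * b ^ 2 + (1 - s) * a ^ 2 := by
    rcases hs₀.eq_or_lt with rfl | hs₀
    · simp only [zero_mul, sub_zero, one_mul, zero_add]; positivity
    · nlinarith [pow_pos (abs_pos.2 hb) 2, sq_abs b, mul_nonneg (sub_nonneg.2 hs₁) (sq_nonneg a)]
  linarith

lemma div_sub_mem_Icc_of_mul_neg {a b : ℝ} (h : a * b < 0) : a / (a - b) ∈ Icc (0 : ℝ) 1 := by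
  rcases mul_neg_iff.1 h with ⟨ha, hb⟩ | ⟨ha, hb⟩
  · exact ⟨div_nonneg ha.le (by linarith), (div_le_one (by linarith)).2 (by linarith)⟩
  · exact ⟨div_nonneg_of_nonpos ha.le (by linarith),
      (div_le_one_of_neg (by linarith)).2 (by linarith)⟩

lemma mul_orient_neg_of_mem_segment {A B C D x : ℝ × ℝ} (hC : orient A B C ≠ 0)
    (hD : orient A B D ≠ 0) (hAB : x ∈ segment ℝ A B) (hCD : x ∈ segment ℝ C D) :
    orient A B C * orient A B D < 0 := by
  rw [segment_eq_image'] at hCD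
  obtain ⟨s, ⟨hs₀, hs₁⟩, rfl⟩ := hCD
  exact mul_neg_of_convex_combination_eq_zero hC hD hs₀ hs₁
    (orient_add_smul_sub A B C D s ▸ orient_eq_zero_of_mem_segment hAB)

lemma sub_ne_zero_of_mul_neg {a b : ℝ} (h : a * b < 0) : a - b ≠ 0 := fun hab => by
  rw [sub_eq_zero.1 hab] at h
  exact (mul_self_nonneg b).not_gt h

lemma segment_inter_nonempty_of_mul_orient_neg {A B C D : ℝ × ℝ}
    (h₁ : orient A B C * orient A B D < 0) (h₂ : orient C D A * orient C D B < 0) :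
    (segment ℝ A B ∩ segment ℝ C D).Nonempty := by
  have hne₁ := sub_ne_zero_of_mul_neg h₁
  have hne₂ := sub_ne_zero_of_mul_neg h₂
  -- the zero of the affine map `t ↦ orient C D (A + t • (B - A))`
  refine ⟨A + (orient C D A / (orient C D A - orient C D B)) • (B - A),
    (segment_eq_image' ℝ A B).symm ▸ mem_image_of_mem _ (div_sub_mem_Icc_of_mul_neg h₂), ?_⟩
  rw [segment_eq_image']
  refine ⟨_, div_sub_mem_Icc_of_mul_neg h₁, ?_⟩
  simp only [orient, det2, Prod.fst_sub, Prod.snd_sub] at hne₁ hne₂ ⊢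
  ext <;> simp only [Prod.fst_add, Prod.snd_add, Prod.smul_fst, Prod.smul_snd, Prod.fst_sub,
    Prod.snd_sub, smul_eq_mul] <;> field_simp <;> ring

lemma segment_inter_nonempty_iff {A B C D : ℝ × ℝ} (hC : orient A B C ≠ 0)
    (hD : orient A B D ≠ 0) (hA : orient C D A ≠ 0) (hB : orient C D B ≠ 0) :
    (segment ℝ A B ∩ segment ℝ C D).Nonempty ↔
      orient A B C * orient A B D < 0 ∧ orient C D A * orient C D B < 0 :=
  ⟨fun ⟨_, hAB, hCD⟩ => ⟨mul_orient_neg_of_mem_segment hC hD hAB hCD,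
    mul_orient_neg_of_mem_segment hA hB hCD hAB⟩,
   fun h => segment_inter_nonempty_of_mul_orient_neg h.1 h.2⟩

lemma mul_neg_iff_of_ne_zero {a b : ℝ} (ha : a ≠ 0) (hb : b ≠ 0) :
    a * b < 0 ↔ (0 < a ↔ ¬0 < b) := by
  rcases ha.lt_or_gt with ha | ha <;> rcases hb.lt_or_gt with hb | hb <;>
    simp [mul_neg_iff, ha, hb, ha.not_gt, hb.not_gt]

section ConvexPosition

variable {n : ℕ} {p : Fin n → ℝ × ℝ} {i j k l : Fin n}

lemma CCWConvex.orient_pos_of_sbtw (hp : CCWConvex p) (h : sbtw i j k) :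
    0 < orient (p i) (p j) (p k) := by
  rcases h with ⟨hij, hjk⟩ | ⟨hjk, hki⟩ | ⟨hki, hij⟩
  · exact hp i j k hij hjk
  · rw [← orient_rotate]; exact hp j k i hjk hki
  · rw [orient_rotate]; exact hp k i j hki hij

lemma CCWConvex.orient_pos_iff_sbtw (hp : CCWConvex p) (hij : i ≠ j) (hik : i ≠ k)
    (hjk : j ≠ k) :
    0 < orient (p i) (p j) (p k) ↔ sbtw i j k := by
  refine ⟨fun h => ?_, hp.orient_pos_of_sbtw⟩
  by_contra h'
  have : sbtw i k j := by simp only [Fin.sbtw_iff] at h' ⊢; omega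
  linarith [hp.orient_pos_of_sbtw this, orient_swap (p i) (p j) (p k)]

lemma CCWConvex.orient_ne_zero (hp : CCWConvex p) (hij : i ≠ j) (hik : i ≠ k) (hjk : j ≠ k) :
    orient (p i) (p j) (p k) ≠ 0 := by
  rcases (show sbtw i j k ∨ sbtw i k j by simp only [Fin.sbtw_iff]; omega) with h | h
  · exact (hp.orient_pos_of_sbtw h).ne'
  · linarith [hp.orient_pos_of_sbtw h, orient_swap (p i) (p j) (p k)]

lemma CCWConvex.mul_orient_neg_iff (hp : CCWConvex p) (hij : i ≠ j) (hik : i ≠ k)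
    (hil : i ≠ l) (hjk : j ≠ k) (hjl : j ≠ l) :
    orient (p i) (p j) (p k) * orient (p i) (p j) (p l) < 0 ↔ (sbtw i j k ↔ ¬sbtw i j l) := by
  rw [mul_neg_iff_of_ne_zero (hp.orient_ne_zero hij hik hjk) (hp.orient_ne_zero hij hil hjl),
    hp.orient_pos_iff_sbtw hij hik hjk, hp.orient_pos_iff_sbtw hij hil hjl]

lemma CCWConvex.disjoint_segment_iff (hp : CCWConvex p) (h : [i, j, k, l].Nodup) :
    Disjoint (segment ℝ (p i) (p j)) (segment ℝ (p k) (p l)) ↔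
      (sbtw i k j ↔ sbtw i l j) := by
  simp only [List.nodup_cons, List.mem_cons, List.not_mem_nil, not_or, List.nodup_nil] at h
  obtain ⟨⟨hij, hik, hil, -⟩, ⟨hjk, hjl, -⟩, ⟨hkl, -⟩, -⟩ := h
  rw [Set.disjoint_iff_inter_eq_empty, ← Set.not_nonempty_iff_eq_empty,
    segment_inter_nonempty_iff (hp.orient_ne_zero hij hik hjk) (hp.orient_ne_zero hij hil hjl)
      (hp.orient_ne_zero hkl (Ne.symm hik) (Ne.symm hil))
      (hp.orient_ne_zero hkl (Ne.symm hjk) (Ne.symm hjl)),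
    hp.mul_orient_neg_iff hij hik hil hjk hjl,
    hp.mul_orient_neg_iff hkl (Ne.symm hik) (Ne.symm hjk) (Ne.symm hil) (Ne.symm hjl)]
  simp only [Fin.sbtw_iff]
  omega

lemma CCWConvex.disjoint_segment_shortcut {a m b c d : Fin n} (hp : CCWConvex p)
    (h : [a, m, b, c, d].Nodup)
    (ham : Disjoint (segment ℝ (p a) (p m)) (segment ℝ (p c) (p d)))
    (hmb : Disjoint (segment ℝ (p m) (p b)) (segment ℝ (p c) (p d))) :
    Disjoint (segment ℝ (p a) (p b)) (segment ℝ (p c) (p d)) := by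
  rw [hp.disjoint_segment_iff (h.sublist (by simp))] at ham hmb ⊢
  simp only [List.nodup_cons, List.mem_cons, List.not_mem_nil, not_or,
    List.nodup_nil, Fin.sbtw_iff] at h ham hmb ⊢
  omega

end ConvexPosition

lemma NoncrossingPath.disjoint {m : ℕ} {f : Fin m → ℝ × ℝ} (hf : NoncrossingPath f)
    {u v : ℕ} (hu : u + 1 < m) (hv : v + 1 < m) (huv : u + 1 < v) :
    Disjoint (segment ℝ (f ⟨u, by omega⟩) (f ⟨u + 1, hu⟩))
      (segment ℝ (f ⟨v, by omega⟩) (f ⟨v + 1, hv⟩)) := by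
  simpa only [show v ≠ u + 1 by omega, ↓reduceIte] using hf u v hu hv (by omega)

section ConvexPath

variable {m n : ℕ} {p : Fin n → ℝ × ℝ} {f : Fin m → Fin n}

lemma CCWConvex.noncrossingPath_comp (hp : CCWConvex p) (hf : Injective f)
    (h : ∀ u v (hu : u + 1 < m) (hv : v + 1 < m), u + 1 < v →
      Disjoint (segment ℝ (p (f ⟨u, by omega⟩)) (p (f ⟨u + 1, hu⟩)))
        (segment ℝ (p (f ⟨v, by omega⟩)) (p (f ⟨v + 1, hv⟩)))) :
    NoncrossingPath (p ∘ f) := by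
  intro u v hu hv huv
  split_ifs with hv'
  · subst hv'
    exact segment_inter_segment_eq_singleton
      (hp.orient_ne_zero (hf.ne (by simp only [ne_eq, Fin.mk.injEq]; omega))
        (hf.ne (by simp only [ne_eq, Fin.mk.injEq]; omega))
        (hf.ne (by simp only [ne_eq, Fin.mk.injEq]; omega)))
  · exact h u v hu hv (by omega)

lemma CCWConvex.disjoint_shortcut_left (hp : CCWConvex p) (hf : Injective f)
    (hpf : NoncrossingPath (p ∘ f)) {u v : ℕ} (huv : u + 2 < v) (hv : v + 1 < m) :
    Disjoint (segment ℝ (p (f ⟨u, by omega⟩)) (p (f ⟨u + 2, by omega⟩)))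
      (segment ℝ (p (f ⟨v, by omega⟩)) (p (f ⟨v + 1, hv⟩))) := by
  refine hp.disjoint_segment_shortcut ?_ (hpf.disjoint (by omega) hv (by omega))
    (hpf.disjoint (u := u + 1) (by omega) hv (by omega))
  simp only [List.nodup_cons, List.mem_cons, List.not_mem_nil, List.nodup_nil, hf.eq_iff,
    Fin.mk.injEq, or_false, not_or, not_false_eq_true, and_true]
  omega

lemma CCWConvex.disjoint_shortcut_right (hp : CCWConvex p) (hf : Injective f)
    (hpf : NoncrossingPath (p ∘ f)) {u v : ℕ} (huv : u + 1 < v) (hv : v + 2 < m) :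
    Disjoint (segment ℝ (p (f ⟨u, by omega⟩)) (p (f ⟨u + 1, by omega⟩)))
      (segment ℝ (p (f ⟨v, by omega⟩)) (p (f ⟨v + 2, hv⟩))) := by
  refine (hp.disjoint_segment_shortcut ?_ (hpf.disjoint (by omega) (by omega) huv).symm
    (hpf.disjoint (v := v + 1) (by omega) hv (by omega)).symm).symm
  simp only [List.nodup_cons, List.mem_cons, List.not_mem_nil, List.nodup_nil, hf.eq_iff,
    Fin.mk.injEq, or_false, not_or, not_false_eq_true, and_true]
  omega

end ConvexPath

def skipIndex {n : ℕ} (k : ℕ) (j : Fin (n - 1)) : Fin n :=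
  if (j : ℕ) < k then ⟨j, j.isLt.trans_le (n.sub_le 1)⟩
  else ⟨j + 1, Nat.add_lt_of_lt_sub j.isLt⟩

lemma skipIndex_of_lt {n k j : ℕ} (hj : j < n - 1) (h : j < k) :
    skipIndex k ⟨j, hj⟩ = ⟨j, by omega⟩ :=
  if_pos h

lemma skipIndex_of_le {n k j : ℕ} (hj : j < n - 1) (h : k ≤ j) :
    skipIndex k ⟨j, hj⟩ = ⟨j + 1, by omega⟩ :=
  if_neg h.not_gt

lemma skipIndex_injective {n : ℕ} (k : ℕ) : Injective (skipIndex (n := n) k) := by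
  intro a b h
  simp only [skipIndex] at h
  split_ifs at h <;> simp only [Fin.mk.injEq] at h <;> ext <;> omega

theorem delete_vertex_noncrossing {n : ℕ}
    (p : Fin n → ℝ × ℝ) (hp : CCWConvex p)
    (σ : Equiv.Perm (Fin n)) (hσ : NoncrossingPath (p ∘ σ))
    (k : ℕ) :
    NoncrossingPath (fun j : Fin (n - 1) =>
      p (σ (if h : (j : ℕ) < k then ⟨j, by omega⟩
            else ⟨(j : ℕ) + 1, by have := j.isLt; omega⟩))) := by
  show NoncrossingPath (p ∘ (σ ∘ skipIndex k))
  refine hp.noncrossingPath_comp (σ.injective.comp (skipIndex_injective k)) ?_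
  intro u v hu hv huv
  simp only [Function.comp_apply]
  rcases lt_trichotomy (v + 1) k with hvk | rfl | hkv
  · simp (disch := omega) only [skipIndex_of_lt]
    exact hσ.disjoint _ _ huv
  · simp (disch := omega) only [skipIndex_of_lt, skipIndex_of_le]
    exact hp.disjoint_shortcut_right σ.injective hσ huv (by omega)
  rcases lt_trichotomy (u + 1) k with huk | rfl | hku
  · simp (disch := omega) only [skipIndex_of_lt, skipIndex_of_le]
    exact hσ.disjoint _ _ (by omega)
  · simp (disch := omega) only [skipIndex_of_lt, skipIndex_of_le]
    exact hp.disjoint_shortcut_left σ.injective hσ (by omega) (by omega)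
  · simp (disch := omega) only [skipIndex_of_le]
    exact hσ.disjoint _ _ (by omega)
end

section
/- Let n ≥ 2 and let p : Fin n → ℝ² be in counterclockwise convex position. Let I ⊆ Fin n be a nonempty proper cyclic arc, and let (s_0, …, s_{m−1}) be an enumeration of I (m = |I|) such that the path visiting p(s_0), …, p(s_{m−1}) in this order is noncrossing and s_{m−1} is an endpoint of I. Let ℓ ∉ I be a label such that I ∪ {ℓ} is again a cyclic arc. Then the extended path visiting p(s_0), …, p(s_{m−1}), p(ℓ) in this order is noncrossing. -/
/-!
The last vertex `b` of the path is the first or the last element of the arc `I`. Measuring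
positions cyclically from `b`, every other element of `I` comes before `ℓ` in the first case and
after `ℓ` in the second, so by convex position all earlier vertices of the path lie strictly on one
side of the line through `p b` and `p ℓ`. The new edge lies on that line, so it misses every old
edge not incident to `p b` and meets the last old edge only in `p b`.
-/
namespace Fin

variable {n : ℕ} [NeZero n]

theorem val_eq_add_mod_iff (x : Fin n) (i : ℕ) {r : ℕ} (hr : r < n) :
    (x : ℕ) = (i + r) % n ↔ ((x - Fin.ofNat n i : Fin n) : ℕ) = r := by
  calc (x : ℕ) = (i + r) % n ↔ x = Fin.ofNat n i + Fin.ofNat n r := by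
        rw [Fin.ext_iff, val_add, val_ofNat, val_ofNat, Nat.mod_add_mod, Nat.add_mod_mod]
    _ ↔ x - Fin.ofNat n i = Fin.ofNat n r := sub_eq_iff_eq_add'.symm
    _ ↔ _ := by rw [Fin.ext_iff, val_ofNat, Nat.mod_eq_of_lt hr]

theorem val_sub_eq_val_sub_add_one_add_one {x b : Fin n} (h : x ≠ b) :
    ((x - b : Fin n) : ℕ) = ((x - (b + 1) : Fin n) : ℕ) + 1 := by
  have hne : x - b ≠ 0 := sub_ne_zero.2 h
  rw [← sub_sub, val_sub_one_of_ne_zero hne]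
  have := Fin.val_ne_zero_iff.2 hne
  omega

end Fin

/-- `Fin` subtraction is taken mod `n`, so this is the arc `{i, i + 1, …, i + (t - 1)}`. -/
def arcFrom {n : ℕ} (i : Fin n) (t : ℕ) : Set (Fin n) := {x | ((x - i : Fin n) : ℕ) < t}

@[simp]
theorem mem_arcFrom {n : ℕ} {i x : Fin n} {t : ℕ} : x ∈ arcFrom i t ↔ ((x - i : Fin n) : ℕ) < t :=
  Iff.rfl

section Arcs

variable {n : ℕ} [NeZero n] {A : Set (Fin n)}

theorem IsArc.exists_eq_arcFrom (hA : IsArc A) : ∃ i : Fin n, ∃ t ≤ n, A = arcFrom i t := by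
  obtain ⟨i, t, htn, hA⟩ := hA
  refine ⟨Fin.ofNat n i, t, htn, Set.ext fun x => (hA x).trans ⟨?_, fun hx => ⟨_, hx, ?_⟩⟩⟩
  · rintro ⟨r, hrt, hr⟩
    rwa [mem_arcFrom, (Fin.val_eq_add_mod_iff x i (by omega)).1 hr]
  · exact (Fin.val_eq_add_mod_iff x i (Fin.is_lt _)).2 rfl

theorem IsArc.compl (hA : IsArc A) : IsArc Aᶜ := by
  obtain ⟨i, t, htn, rfl⟩ := hA.exists_eq_arcFrom
  refine ⟨i + t, n - t, Nat.sub_le n t, fun x => ?_⟩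
  have hx := (x - i).is_lt
  simp only [Set.mem_compl_iff, mem_arcFrom, not_lt]
  constructor
  · intro h
    refine ⟨(x - i : Fin n) - t, by omega, ?_⟩
    rw [add_assoc, Fin.val_eq_add_mod_iff x i (by omega), Fin.ofNat_val_eq_self]
    omega
  · rintro ⟨r, hr, hx'⟩
    rw [add_assoc, Fin.val_eq_add_mod_iff x i (by omega), Fin.ofNat_val_eq_self] at hx'
    omega

theorem eq_of_mem_arcFrom_of_sub_one_notMem {i x : Fin n} {t : ℕ} (hx : x ∈ arcFrom i t)
    (hx' : x - 1 ∉ arcFrom i t) : x = i := by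
  by_contra hxi
  apply hx'
  show ((x - 1 - i : Fin n) : ℕ) < t
  rw [sub_right_comm, Fin.val_sub_one_of_ne_zero (sub_ne_zero.2 hxi)]
  exact (Nat.sub_le _ _).trans_lt hx

theorem IsArc.eq_of_sub_one_notMem (hA : IsArc A) {x y : Fin n} (hx : x ∈ A) (hx' : x - 1 ∉ A)
    (hy : y ∈ A) (hy' : y - 1 ∉ A) : x = y := by
  obtain ⟨i, t, -, rfl⟩ := hA.exists_eq_arcFrom
  rw [eq_of_mem_arcFrom_of_sub_one_notMem hx hx', eq_of_mem_arcFrom_of_sub_one_notMem hy hy']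

theorem IsArc.exists_mem_sub_one_notMem (hA : IsArc A) {a x : Fin n} (ha : a ∈ A) (hx : x ∉ A) :
    ∃ e ∈ A, e - 1 ∉ A := by
  obtain ⟨i, t, -, rfl⟩ := hA.exists_eq_arcFrom
  have hxa : x ≠ a := fun h => hx (h ▸ ha)
  have hxi := (x - i).is_lt
  refine ⟨i, by simpa using (Nat.zero_le _).trans_lt ha, fun hi => hxa ?_⟩
  rw [mem_arcFrom, sub_sub_cancel_left, Fin.val_neg] at hi
  simp only [mem_arcFrom, not_lt] at ha hx
  split_ifs at hi with h1
  · rw [Fin.one_eq_zero_iff] at h1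
    subst h1
    exact Subsingleton.elim _ _
  · rw [Fin.one_eq_zero_iff] at h1
    rw [Fin.val_one', Nat.mod_eq_of_lt (by omega)] at hi
    omega

variable {b : Fin n}

theorem IsArc.sub_one_notMem_or_add_one_notMem (hA : IsArc A) (hAb : IsArc (A \ {b}))
    (hb : b ∈ A) {x : Fin n} (hx : x ∉ A) : b - 1 ∉ A ∨ b + 1 ∉ A := by
  by_contra! h
  obtain ⟨e, he, he'⟩ := hA.exists_mem_sub_one_notMem hb hx
  have heb : e ≠ b := by
    rintro rfl
    exact he' h.1
  have hb1 : b + 1 ≠ b := by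
    rw [Ne, add_eq_left, Fin.one_eq_zero_iff]
    rintro rfl
    exact hx (Subsingleton.elim b x ▸ hb)
  have hbe : e = b + 1 :=
    hAb.eq_of_sub_one_notMem ⟨he, heb⟩ (fun h' => he' h'.1) ⟨h.2, hb1⟩ (by simp)
  exact he' (by rwa [hbe, add_sub_cancel_right])

theorem IsArc.val_sub_lt_val_sub_of_sub_one_notMem (hA : IsArc A) (hb : b ∈ A) (hb' : b - 1 ∉ A)
    {a ℓ : Fin n} (ha : a ∈ A \ {b}) (hℓ : ℓ ∉ A) :
    0 < ((a - b : Fin n) : ℕ) ∧ ((a - b : Fin n) : ℕ) < ((ℓ - b : Fin n) : ℕ) := by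
  obtain ⟨i, t, -, rfl⟩ := hA.exists_eq_arcFrom
  obtain rfl := eq_of_mem_arcFrom_of_sub_one_notMem hb hb'
  have hab := Fin.val_ne_zero_iff.2 (sub_ne_zero.2 ha.2)
  simp only [Set.mem_sdiff, mem_arcFrom, not_lt] at ha hℓ
  omega

theorem IsArc.val_sub_lt_val_sub_of_add_one_notMem (hA : IsArc A) (hb : b ∈ A) (hb' : b + 1 ∉ A)
    {a ℓ : Fin n} (ha : a ∈ A \ {b}) (hℓ : ℓ ∉ A) :
    0 < ((ℓ - b : Fin n) : ℕ) ∧ ((ℓ - b : Fin n) : ℕ) < ((a - b : Fin n) : ℕ) := by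
  -- `b + 1` is the first element of the complementary arc
  obtain ⟨i, u, -, hAc⟩ := hA.compl.exists_eq_arcFrom
  have hb1 : b + 1 ∈ arcFrom i u := hAc ▸ show b + 1 ∈ Aᶜ from hb'
  have hi : b + 1 = i :=
    eq_of_mem_arcFrom_of_sub_one_notMem hb1 (by rw [← hAc, add_sub_cancel_right]; simpa)
  have hℓ' : ℓ ∈ arcFrom i u := hAc ▸ show ℓ ∈ Aᶜ from hℓ
  have ha' : a ∉ arcFrom i u := by
    rw [← hAc]
    simpa using ha.1
  subst hi
  rw [Fin.val_sub_eq_val_sub_add_one_add_one (ne_of_mem_of_not_mem hb hℓ).symm,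
    Fin.val_sub_eq_val_sub_add_one_add_one ha.2]
  simp only [mem_arcFrom, not_lt] at hℓ' ha'
  omega

end Arcs

theorem det2_self (v : ℝ × ℝ) : det2 v v = 0 := by
  unfold det2
  ring

theorem det2_sub_rotate_s7 (u v w : ℝ × ℝ) : det2 (v - u) (w - u) = det2 (w - v) (u - v) := by
  simp only [det2, Prod.fst_sub, Prod.snd_sub]
  ring

theorem isLinearMap_det2_left (w : ℝ × ℝ) : IsLinearMap ℝ (fun z => det2 z w) where
  map_add x y := by
    simp only [det2, Prod.fst_add, Prod.snd_add]
    ring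
  map_smul c x := by
    simp only [det2, Prod.smul_fst, Prod.smul_snd, smul_eq_mul]
    ring

theorem isLinearMap_det2_right (w : ℝ × ℝ) : IsLinearMap ℝ (det2 w) where
  map_add x y := by
    simp only [det2, Prod.fst_add, Prod.snd_add]
    ring
  map_smul c x := by
    simp only [det2, Prod.smul_fst, Prod.smul_snd, smul_eq_mul]
    ring

theorem CCWConvex.det2_pos_of_val_sub_lt {n : ℕ} {p : Fin n → ℝ × ℝ} (hp : CCWConvex p)
    {b y z : Fin n} (hy : 0 < ((y - b : Fin n) : ℕ))
    (hyz : ((y - b : Fin n) : ℕ) < ((z - b : Fin n) : ℕ)) :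
    0 < det2 (p y - p b) (p z - p b) := by
  have hcases : (b < y ∧ y < z) ∨ (y < z ∧ z < b) ∨ (z < b ∧ b < y) := by
    have hy' := Fin.intCast_val_sub_eq_sub_add_ite y b
    have hz' := Fin.intCast_val_sub_eq_sub_add_ite z b
    simp only [Fin.lt_def, Fin.le_def] at *
    split_ifs at hy' hz' <;> omega
  rcases hcases with ⟨h1, h2⟩ | ⟨h1, h2⟩ | ⟨h1, h2⟩
  · exact hp b y z h1 h2
  · rw [← det2_sub_rotate_s7 (p z), ← det2_sub_rotate_s7 (p y)]
    exact hp y z b h1 h2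
  · rw [← det2_sub_rotate_s7 (p z)]
    exact hp z b y h1 h2

theorem IsLinearMap.eq_right_of_mem_segment {𝕜 E : Type*} [Field 𝕜] [PartialOrder 𝕜]
    [AddCommGroup E] [Module 𝕜 E] {f : E → 𝕜} (hf : IsLinearMap 𝕜 f) {u v z : E}
    (huv : f u ≠ f v) (hz : z ∈ segment 𝕜 u v) (hfz : f z = f v) : z = v := by
  obtain ⟨a, c, -, -, hac, rfl⟩ := hz
  obtain rfl : c = 1 - a := by linear_combination hac
  rw [hf.map_add, hf.map_smul, hf.map_smul, smul_eq_mul, smul_eq_mul] at hfz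
  have ha : a * (f u - f v) = 0 := by linear_combination hfz
  obtain rfl := (mul_eq_zero.1 ha).resolve_right (sub_ne_zero.2 huv)
  simp

theorem NoncrossingPath.snoc {m : ℕ} {f : Fin m → ℝ × ℝ} (hf : NoncrossingPath f) (hm : 1 ≤ m)
    {q : ℝ × ℝ} {φ : ℝ × ℝ → ℝ} (hφ : IsLinearMap ℝ φ)
    (hq : φ (q - f ⟨m - 1, Nat.sub_lt hm one_pos⟩) = 0)
    (hside : ∀ j : Fin m, (j : ℕ) < m - 1 → 0 < φ (f j - f ⟨m - 1, Nat.sub_lt hm one_pos⟩)) :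
    NoncrossingPath (fun j : Fin (m + 1) => if h : (j : ℕ) < m then f ⟨j, h⟩ else q) := by
  set b := f ⟨m - 1, Nat.sub_lt hm one_pos⟩
  have hline : segment ℝ b q ⊆ {z | φ z = φ b} :=
    (convex_hyperplane hφ _).segment_subset rfl (by simpa [hφ.map_sub, sub_eq_zero] using hq)
  have hopen : ∀ j : Fin m, (j : ℕ) < m - 1 → φ b < φ (f j) := fun j hj => by
    simpa [hφ.map_sub] using hside j hj
  intro k l hk hl hkl
  by_cases hl' : l + 1 < m
  · simpa [hl', show k < m by omega, show k + 1 < m by omega, show l < m by omega]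
      using hf k l (by omega) hl' hkl
  obtain rfl : l = m - 1 := by omega
  have hk' : k < m - 1 := by omega
  simp only [show k < m by omega, show k + 1 < m by omega, show m - 1 < m by omega,
    show ¬ m - 1 + 1 < m by omega, dite_true, dite_false]
  split_ifs with hadj
  · have hb : f ⟨k + 1, by omega⟩ = b := congrArg f (Fin.ext hadj.symm)
    rw [hb]
    refine Set.Subset.antisymm (fun z ⟨hz, hz'⟩ => ?_) ?_
    · exact hφ.eq_right_of_mem_segment (hopen _ hk').ne' hz (hline hz')
    · rw [Set.singleton_subset_iff]
      exact ⟨right_mem_segment _ _ _, left_mem_segment _ _ _⟩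
  · rw [Set.disjoint_left]
    intro z hz hz'
    have hz_pos := (convex_halfSpace_gt hφ (φ b)).segment_subset (hopen _ hk')
      (hopen _ (show k + 1 < m - 1 by omega)) hz
    exact hz_pos.ne' (hline hz')

theorem greedy_extension_noncrossing {n : ℕ}
    (p : Fin n → ℝ × ℝ) (hp : CCWConvex p)
    (I : Set (Fin n)) (hI : IsArc I)
    (m : ℕ) (hm : 1 ≤ m) (s : Fin m → Fin n) (hs : Function.Injective s)
    (hrange : ∀ x : Fin n, x ∈ I ↔ ∃ j : Fin m, s j = x)
    (hpath : NoncrossingPath (p ∘ s))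
    (hend : IsArc (I \ {s ⟨m - 1, by omega⟩}))
    (ℓ : Fin n) (hℓ : ℓ ∉ I) :
    NoncrossingPath (fun j : Fin (m + 1) =>
      if h : (j : ℕ) < m then p (s ⟨j, h⟩) else p ℓ) := by
  have := ℓ.neZero
  set b := s ⟨m - 1, by omega⟩
  have hb : b ∈ I := (hrange b).2 ⟨_, rfl⟩
  have hvertex : ∀ j : Fin m, (j : ℕ) < m - 1 → s j ∈ I \ {b} := fun j hj =>
    ⟨(hrange _).2 ⟨j, rfl⟩, fun hjb => hj.ne (congrArg Fin.val (hs hjb))⟩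
  rcases hI.sub_one_notMem_or_add_one_notMem hend hb hℓ with hfirst | hlast
  · refine hpath.snoc hm (isLinearMap_det2_left (p ℓ - p b)) (det2_self _) fun j hj => ?_
    obtain ⟨hpos, hlt⟩ := hI.val_sub_lt_val_sub_of_sub_one_notMem hb hfirst (hvertex j hj) hℓ
    exact hp.det2_pos_of_val_sub_lt hpos hlt
  · refine hpath.snoc hm (isLinearMap_det2_right (p ℓ - p b)) (det2_self _) fun j hj => ?_
    obtain ⟨hpos, hlt⟩ := hI.val_sub_lt_val_sub_of_add_one_notMem hb hlast (hvertex j hj) hℓ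
    exact hp.det2_pos_of_val_sub_lt hpos hlt
end

section
/- Let n ≥ 1, let p : Fin n → ℝ², let σ : Fin n → Fin n be a bijection, and suppose there exists a nonzero vector v ∈ ℝ² such that the function k ↦ ⟨p(σ k), v⟩ (standard inner product on ℝ²) is strictly increasing in k. Then p is injective and the spanning path of σ on p is noncrossing; that is, every monotone path is noncrossing. -/
/-!
Projecting onto `v` is a linear functional `f` that strictly increases along the path, so the
`k`-th edge lies in the slab `f (p σ k) ≤ f ≤ f (p σ (k+1))`. Slabs of nonconsecutive edges are
disjoint, consecutive ones share only the hyperplane `f = f (p σ (k+1))`, and an edge meets that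
hyperplane only at its endpoint because `f` is not constant on it.
-/

open Set

section Segment

variable {E : Type*} [AddCommGroup E] [Module ℝ E] (f : E →ₗ[ℝ] ℝ) {a b x : E}

theorem LinearMap.mem_Icc_of_mem_segment (hab : f a ≤ f b) (hx : x ∈ segment ℝ a b) :
    f x ∈ Icc (f a) (f b) := by
  rw [← segment_eq_Icc hab, ← f.coe_toAffineMap, ← image_segment]
  exact mem_image_of_mem _ hx

theorem LinearMap.eq_right_of_mem_segment (hab : f a ≠ f b) (hx : x ∈ segment ℝ a b)
    (hfx : f x = f b) : x = b := by
  obtain ⟨s, t, -, -, hst, rfl⟩ := hx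
  have hs : s * (f a - f b) = 0 := by
    rw [map_add, map_smul, map_smul, smul_eq_mul, smul_eq_mul] at hfx
    linear_combination hfx - f b * hst
  obtain rfl : s = 0 := (mul_eq_zero.1 hs).resolve_right (sub_ne_zero.2 hab)
  obtain rfl : t = 1 := by linarith
  simp

end Segment

theorem noncrossingPath_of_strictMono_comp {m : ℕ} (g : Fin m → ℝ × ℝ)
    (f : ℝ × ℝ →ₗ[ℝ] ℝ) (hfg : StrictMono (f ∘ g)) : NoncrossingPath g := by
  intro k l hk hl hkl
  have hedge : ∀ i (hi : i + 1 < m), f (g ⟨i, by omega⟩) < f (g ⟨i + 1, hi⟩) := fun i hi =>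
    hfg (Fin.mk_lt_mk.2 i.lt_succ_self)
  have hupper : ∀ x ∈ segment ℝ (g ⟨k, by omega⟩) (g ⟨k + 1, hk⟩), f x ≤ f (g ⟨k + 1, hk⟩) :=
    fun x hx => (f.mem_Icc_of_mem_segment (hedge k hk).le hx).2
  have hlower : ∀ x ∈ segment ℝ (g ⟨l, by omega⟩) (g ⟨l + 1, hl⟩), f (g ⟨l, by omega⟩) ≤ f x :=
    fun x hx => (f.mem_Icc_of_mem_segment (hedge l hl).le hx).1
  split_ifs with hlk
  · subst hlk
    refine subset_antisymm (fun x ⟨hx, hx'⟩ => ?_) (singleton_subset_iff.2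
      ⟨right_mem_segment _ _ _, left_mem_segment _ _ _⟩)
    exact f.eq_right_of_mem_segment (hedge k hk).ne hx
      ((hupper x hx).antisymm (hlower x hx'))
  · have hgap : f (g ⟨k + 1, hk⟩) < f (g ⟨l, by omega⟩) := hfg (Fin.mk_lt_mk.2 (by omega))
    exact disjoint_left.2 fun x hx hx' =>
      (hgap.trans_le ((hlower x hx').trans (hupper x hx))).false

theorem monotone_path_noncrossing_general {n : ℕ}
    (p : Fin n → ℝ × ℝ) (σ : Equiv.Perm (Fin n))
    (v : ℝ × ℝ)
    (hmono : StrictMono fun k : Fin n => (p (σ k)).1 * v.1 + (p (σ k)).2 * v.2) :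
    Function.Injective p ∧ NoncrossingPath (p ∘ σ) := by
  let f : ℝ × ℝ →ₗ[ℝ] ℝ := v.1 • LinearMap.fst ℝ ℝ ℝ + v.2 • LinearMap.snd ℝ ℝ ℝ
  have hf : StrictMono (f ∘ p ∘ σ) := by
    convert hmono using 2 with k
    simp [f, mul_comm]
  exact ⟨(σ.injective_comp p).1 hf.injective.of_comp, noncrossingPath_of_strictMono_comp _ f hf⟩

theorem monotone_path_noncrossing {n : ℕ} (hn : 1 ≤ n)
    (p : Fin n → ℝ × ℝ) (σ : Equiv.Perm (Fin n))
    (v : ℝ × ℝ) (hv : v ≠ 0)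
    (hmono : StrictMono fun k : Fin n => (p (σ k)).1 * v.1 + (p (σ k)).2 * v.2) :
    Function.Injective p ∧ NoncrossingPath (p ∘ σ) :=
  monotone_path_noncrossing_general p σ v hmono
end
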